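/- Let $n=2$, $\lambda\ge 1$, $c>0$ and $d\ge 0$. Then $\int_0^{\lambda^{-2}} t^{-1}e^{-c d^2/t}\,dt \le C\,\log(2+(\lambda d)^{-1})\,(1+\lambda d)^{-N}$ for every $N\in\mathbb{N}$, with $C$ depending only on $c$ and $N$. -/

import Mathlib

/-!
Write `u = λd` and `T = λ⁻²`. Halving the exponent, `e^{-cd²/t} ≤ e^{-cu²/2} e^{-cd²/(2t)}` on
`(0, T]`, and `∫₀^T t⁻¹ e^{-b/t} dt ≤ 1 + log⁺ (T / b)` (bound the integrand by `b⁻¹` below `b` and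
by `t⁻¹` above it). The Gaussian factor `e^{-cu²/2}` beats every power `(1 + u)^{-N}`, and
`log⁺ (2 / (c u²))` is at most a multiple of `log (2 + u⁻¹)`.
-/

open Real MeasureTheory Set

lemma inv_mul_exp_neg_div_le_inv {b t : ℝ} (hb : 0 < b) (ht : 0 < t) :
    t⁻¹ * exp (-b / t) ≤ b⁻¹ := by
  have h : exp (-b / t) ≤ t / b := by
    rw [neg_div, exp_neg, inv_le_comm₀ (exp_pos _) (by positivity), inv_div]
    linarith [add_one_le_exp (b / t)]
  calc t⁻¹ * exp (-b / t) ≤ t⁻¹ * (t / b) := by gcongr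
    _ = b⁻¹ := by field_simp

lemma integrableOn_inv_mul_exp_neg_div_Ioc {b : ℝ} (hb : 0 < b) (T : ℝ) :
    IntegrableOn (fun t => t⁻¹ * exp (-b / t)) (Ioc 0 T) := by
  refine Integrable.mono' (g := fun _ => b⁻¹) (integrableOn_const measure_Ioc_lt_top.ne)
    (by fun_prop) ?_
  filter_upwards [ae_restrict_mem measurableSet_Ioc] with t ht
  rw [norm_of_nonneg (by have := ht.1; positivity)]
  exact inv_mul_exp_neg_div_le_inv hb ht.1

lemma setIntegral_Ioc_inv_mul_exp_neg_div_le_div {b T : ℝ} (hb : 0 < b) (hT : 0 ≤ T) :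
    ∫ t in Ioc 0 T, t⁻¹ * exp (-b / t) ≤ T / b := by
  calc ∫ t in Ioc 0 T, t⁻¹ * exp (-b / t) ≤ ∫ _ in Ioc 0 T, b⁻¹ :=
        setIntegral_mono_on (integrableOn_inv_mul_exp_neg_div_Ioc hb T)
          (integrableOn_const measure_Ioc_lt_top.ne) measurableSet_Ioc
          fun t ht => inv_mul_exp_neg_div_le_inv hb ht.1
    _ = T / b := by simp [hT, div_eq_mul_inv]

lemma setIntegral_Ioc_inv_mul_exp_neg_div_le_log {b T : ℝ} (hb : 0 < b) (hbT : b ≤ T) :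
    ∫ t in Ioc b T, t⁻¹ * exp (-b / t) ≤ log (T / b) := by
  have hinv : IntegrableOn (fun t : ℝ => t⁻¹) (Ioc b T) := by
    rw [← intervalIntegrable_iff_integrableOn_Ioc_of_le hbT]
    exact intervalIntegrable_inv_iff.2 (Or.inr (notMem_uIcc_of_lt hb (hb.trans_le hbT)))
  calc ∫ t in Ioc b T, t⁻¹ * exp (-b / t) ≤ ∫ t in Ioc b T, t⁻¹ :=
        setIntegral_mono_on ((integrableOn_inv_mul_exp_neg_div_Ioc hb T).mono_set
          (Ioc_subset_Ioc_left hb.le)) hinv measurableSet_Ioc fun t ht => by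
            have ht0 : 0 < t := hb.trans ht.1
            exact mul_le_of_le_one_right (inv_nonneg.2 ht0.le)
              (exp_le_one_iff.2 (by rw [neg_div, neg_nonpos]; positivity))
    _ = log (T / b) := by
      rw [← intervalIntegral.integral_of_le hbT]
      exact integral_inv_of_pos hb (hb.trans_le hbT)

lemma setIntegral_Ioc_inv_mul_exp_neg_div_le {b T : ℝ} (hb : 0 < b) (hT : 0 ≤ T) :
    ∫ t in Ioc 0 T, t⁻¹ * exp (-b / t) ≤ 1 + log⁺ (T / b) := by
  rcases le_or_gt T b with hTb | hbT
  · have := setIntegral_Ioc_inv_mul_exp_neg_div_le_div hb hT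
    have := (div_le_one hb).2 hTb
    linarith [posLog_nonneg (x := T / b)]
  · rw [← Ioc_union_Ioc_eq_Ioc hb.le hbT.le, setIntegral_union (Ioc_disjoint_Ioc_of_le le_rfl)
      measurableSet_Ioc (integrableOn_inv_mul_exp_neg_div_Ioc hb b)
      ((integrableOn_inv_mul_exp_neg_div_Ioc hb T).mono_set (Ioc_subset_Ioc_left hb.le))]
    have h₁ := setIntegral_Ioc_inv_mul_exp_neg_div_le_div hb hb.le
    have h₂ := setIntegral_Ioc_inv_mul_exp_neg_div_le_log hb hbT.le
    rw [div_self hb.ne'] at h₁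
    have : log (T / b) ≤ log⁺ (T / b) := le_max_right _ _
    linarith

lemma setIntegral_Ioc_inv_mul_exp_neg_div_le_exp_mul {a T : ℝ} (ha : 0 < a) (hT : 0 < T) :
    ∫ t in Ioc 0 T, t⁻¹ * exp (-a / t) ≤ exp (-a / (2 * T)) * (1 + log⁺ (2 * T / a)) := by
  have hb : 0 < a / 2 := by positivity
  have hpointwise : ∀ t ∈ Ioc 0 T,
      t⁻¹ * exp (-a / t) ≤ exp (-a / (2 * T)) * (t⁻¹ * exp (-(a / 2) / t)) := by
    rintro t ⟨ht, htT⟩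
    have hsplit : exp (-a / t) = exp (-(a / 2) / t) * exp (-(a / 2) / t) := by
      rw [← exp_add]; ring_nf
    have hmono : exp (-(a / 2) / t) ≤ exp (-a / (2 * T)) := by
      rw [exp_le_exp, neg_div, neg_div, neg_le_neg_iff, div_div]
      gcongr
    rw [hsplit]
    calc t⁻¹ * (exp (-(a / 2) / t) * exp (-(a / 2) / t))
        ≤ t⁻¹ * (exp (-a / (2 * T)) * exp (-(a / 2) / t)) := by gcongr
      _ = _ := by ring
  calc ∫ t in Ioc 0 T, t⁻¹ * exp (-a / t)
      ≤ ∫ t in Ioc 0 T, exp (-a / (2 * T)) * (t⁻¹ * exp (-(a / 2) / t)) :=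
        setIntegral_mono_on (integrableOn_inv_mul_exp_neg_div_Ioc ha T)
          ((integrableOn_inv_mul_exp_neg_div_Ioc hb T).const_mul _) measurableSet_Ioc hpointwise
    _ ≤ exp (-a / (2 * T)) * (1 + log⁺ (T / (a / 2))) := by
        rw [integral_const_mul]
        gcongr
        exact setIntegral_Ioc_inv_mul_exp_neg_div_le hb hT.le
    _ = exp (-a / (2 * T)) * (1 + log⁺ (2 * T / a)) := by rw [div_div_eq_mul_div, mul_comm T]

lemma setIntegral_Ioc_zero_inv_eq_zero (T : ℝ) : ∫ t in Ioc 0 T, t⁻¹ = 0 := by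
  rcases le_or_gt T 0 with hT | hT
  · simp [Ioc_eq_empty_of_le hT]
  · refine integral_undef fun h => ?_
    have h' : IntervalIntegrable (fun t : ℝ => t⁻¹) volume 0 T :=
      (intervalIntegrable_iff_integrableOn_Ioc_of_le hT.le).2 h
    rcases intervalIntegrable_inv_iff.1 h' with h | h
    · exact hT.ne h
    · exact h left_mem_uIcc

/-- Completing the square, `N u ≤ N² / (2c) + c u² / 2`. -/
lemma exp_neg_mul_sq_div_two_le {c : ℝ} (hc : 0 < c) (N : ℕ) {u : ℝ} (hu : 0 ≤ u) :
    exp (-(c * u ^ 2 / 2)) ≤ exp (N ^ 2 / (2 * c)) * (1 + u) ^ (-(N : ℝ)) := by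
  have hsquare : N * u ≤ N ^ 2 / (2 * c) + c * u ^ 2 / 2 := by
    have : N ^ 2 / (2 * c) + c * u ^ 2 / 2 - N * u = (c * u - N) ^ 2 / (2 * c) := by
      field_simp; ring
    linarith [div_nonneg (sq_nonneg (c * u - N)) (by positivity : (0 : ℝ) ≤ 2 * c)]
  have hpow : (1 + u) ^ N ≤ exp (N ^ 2 / (2 * c) + c * u ^ 2 / 2) :=
    calc (1 + u) ^ N ≤ exp u ^ N := by gcongr; linarith [add_one_le_exp u]
      _ = exp (N * u) := by rw [← exp_nat_mul]
      _ ≤ _ := exp_le_exp.2 hsquare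
  rw [rpow_neg (by positivity), rpow_natCast, ← div_eq_mul_inv, le_div_iff₀ (by positivity)]
  calc exp (-(c * u ^ 2 / 2)) * (1 + u) ^ N
      ≤ exp (-(c * u ^ 2 / 2)) * exp (N ^ 2 / (2 * c) + c * u ^ 2 / 2) := by gcongr
    _ = exp (N ^ 2 / (2 * c)) := by rw [← exp_add]; ring_nf

lemma one_add_posLog_mul_sq_le {K v : ℝ} (hv : 0 ≤ v) :
    1 + log⁺ (K * v ^ 2) ≤ ((1 + log⁺ K) / log 2 + 2) * log (2 + v) := by
  have hlog2 : 0 < log 2 := log_pos one_lt_two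
  have hlog_ge : log 2 ≤ log (2 + v) := log_le_log two_pos (by linarith)
  have hposLog_v : log⁺ v ≤ log (2 + v) := by
    rw [posLog_eq_log_max_one hv]
    exact log_le_log (by positivity) (max_le (by linarith) (by linarith))
  have hK : 1 + log⁺ K ≤ (1 + log⁺ K) / log 2 * log (2 + v) := by
    rw [div_mul_eq_mul_div, le_div_iff₀ hlog2]
    exact mul_le_mul_of_nonneg_left hlog_ge (by linarith [posLog_nonneg (x := K)])
  have := posLog_mul (x := K) (y := v ^ 2)
  rw [posLog_pow] at this
  push_cast at this
  linarith

/-- Heat-kernel time-integral estimate, `n = 2`: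
`∫₀^{λ⁻²} t⁻¹ e^{-c d²/t} dt ≤ C log(2 + (λd)⁻¹) (1 + λ d)^{-N}` with
`C = C(c, N)` independent of `λ ≥ 1` and `d ≥ 0`. -/
theorem stmt_7 (c : ℝ) (hc : 0 < c) (N : ℕ) :
    ∃ C > (0 : ℝ), ∀ lam d : ℝ, 1 ≤ lam → 0 ≤ d →
      (∫ t in Set.Ioc (0 : ℝ) (lam ^ (-2 : ℝ)),
          t⁻¹ * Real.exp (-c * d ^ 2 / t))
        ≤ C * Real.log (2 + (lam * d)⁻¹) * (1 + lam * d) ^ (-(N : ℝ)) := by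
  set C := ((1 + log⁺ (2 / c)) / log 2 + 2) * exp (N ^ 2 / (2 * c))
  have hC : 0 < C := mul_pos (by
    have := div_nonneg (add_nonneg zero_le_one (posLog_nonneg (x := 2 / c)))
      (log_nonneg one_le_two)
    linarith) (exp_pos _)
  refine ⟨C, hC, fun lam d hlam hd => ?_⟩
  have hlam0 : 0 < lam := one_pos.trans_le hlam
  have hT : lam ^ (-2 : ℝ) = (lam ^ 2)⁻¹ := by
    rw [rpow_neg hlam0.le, show (2 : ℝ) = (2 : ℕ) by norm_num, rpow_natCast]
  rcases hd.eq_or_lt with rfl | hd0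
  -- at `d = 0` the integrand `t⁻¹` is not integrable, so the integral takes the junk value `0`
  · have hRHS : 0 ≤ C * log (2 + (lam * 0)⁻¹) * (1 + lam * 0) ^ (-(N : ℝ)) := by
      simp only [mul_zero, inv_zero, add_zero]
      exact mul_nonneg (mul_nonneg hC.le (log_nonneg one_le_two)) (by positivity)
    exact (le_of_eq (by simp [setIntegral_Ioc_zero_inv_eq_zero])).trans hRHS
  calc ∫ t in Ioc 0 (lam ^ (-2 : ℝ)), t⁻¹ * exp (-c * d ^ 2 / t)
      ≤ exp (-(c * d ^ 2) / (2 * lam ^ (-2 : ℝ)))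
          * (1 + log⁺ (2 * lam ^ (-2 : ℝ) / (c * d ^ 2))) := by
        simp_rw [neg_mul]
        exact setIntegral_Ioc_inv_mul_exp_neg_div_le_exp_mul (by positivity) (by positivity)
    _ = exp (-(c * (lam * d) ^ 2 / 2)) * (1 + log⁺ (2 / c * (lam * d)⁻¹ ^ 2)) := by
        rw [hT]; congr 3 <;> field_simp
    _ ≤ (exp (N ^ 2 / (2 * c)) * (1 + lam * d) ^ (-(N : ℝ)))
          * (((1 + log⁺ (2 / c)) / log 2 + 2) * log (2 + (lam * d)⁻¹)) :=
        mul_le_mul (exp_neg_mul_sq_div_two_le hc N (by positivity))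
          (one_add_posLog_mul_sq_le (by positivity))
          (add_nonneg zero_le_one posLog_nonneg) (by positivity)
    _ = _ := by ring
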